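/- arXiv:2010.07869 — 3 statements merged into one kernel-verified Lean document; each statement's English description precedes it below -/
import Mathlib

section
/- For every odd integer n ≥ 3, the product D_n E_n equals the (n−1)×(n−1) integer matrix M given by: M_{i,i} = −1 for all 1 ≤ i ≤ n−1; M_{i,1} = −2 for every even index i with 2 ≤ i ≤ n−1; and all other entries of M are 0. (In block form: the first row is (−1, 0, …, 0), the block of rows 2,…,n−1 and columns 2,…,n−1 is −I_{n−2}, and the first column below the top entry alternates −2, 0, −2, 0, …, −2.) -/
/-- The reduced Burau matrix `σ_{i,n} ∈ Mat_{n-1}(ℤ)` of the braid generator `σ_i ∈ B_n`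
evaluated at `t = -1`, for `1 ≤ i ≤ n-1` (the index `i` is 1-based, rows/columns of the
matrix are 0-based): it agrees with the identity matrix except in row `i` (1-based), where
the entry in column `i-1` is `-1` (when `i ≥ 2`), the entry in column `i` is `1`, and the
entry in column `i+1` is `1` (when `i ≤ n-2`). -/
def burauSigma (n i : ℕ) : Matrix (Fin (n - 1)) (Fin (n - 1)) ℤ :=
  Matrix.of fun a b =>
    if a.val + 1 = i then
      if b.val + 2 = i then -1 else if b.val + 1 = i then 1 else if b.val = i then 1 else 0
    else if a = b then 1 else 0

/-- `D_n = σ_{1,n} σ_{2,n} ⋯ σ_{n-1,n}`, the reduced Burau matrix at `t = -1` of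
`δ = σ_1 σ_2 ⋯ σ_{n-1} ∈ B_n`. -/
def burauD (n : ℕ) : Matrix (Fin (n - 1)) (Fin (n - 1)) ℤ :=
  ((List.range (n - 1)).map fun i => burauSigma n (i + 1)).prod

/-- `E_n = σ_{n-1,n} σ_{n-2,n} ⋯ σ_{1,n}`, the reduced Burau matrix at `t = -1` of
`δ^Δ = σ_{n-1} σ_{n-2} ⋯ σ_1 ∈ B_n`. -/
def burauE (n : ℕ) : Matrix (Fin (n - 1)) (Fin (n - 1)) ℤ :=
  ((List.range (n - 1)).reverse.map fun i => burauSigma n (i + 1)).prod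

lemma sum_ite_shift {m : ℕ} (t i : ℕ) (g : Fin m → ℤ) :
    ∑ c : Fin m, (if c.val + t = i then g c else 0) =
      if h : i - t < m ∧ t ≤ i then g ⟨i - t, h.1⟩ else 0 := by
  split_ifs with h
  · rw [Finset.sum_eq_single (⟨i - t, h.1⟩ : Fin m)]
    · rw [if_pos (show ((⟨i - t, h.1⟩ : Fin m) : ℕ) + t = i by
        show i - t + t = i; omega)]
    · intro c _ hc
      rw [if_neg]; intro hct; apply hc; apply Fin.ext; show c.val = i - t; omega
    · simp
  · apply Finset.sum_eq_zero; intro c _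
    rw [if_neg]; intro hct; have := c.isLt; omega

lemma mul_sigma (n i : ℕ) (A : Matrix (Fin (n-1)) (Fin (n-1)) ℤ) (h1 : 1 ≤ i)
    (h2 : i - 1 < n - 1) (a b : Fin (n-1)) :
    (A * burauSigma n i) a b = A a b +
      A a ⟨i-1, h2⟩ * (if b.val + 2 = i then -1 else if b.val = i then 1 else 0) := by
  rw [Matrix.mul_apply]
  have key : ∀ c : Fin (n-1), A a c * burauSigma n i c b =
      (if c = b then A a c else 0) +
      (if c.val + 1 = i then
        A a c * (if b.val + 2 = i then -1 else if b.val = i then 1 else 0) else 0) := by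
    intro c
    simp only [burauSigma, Matrix.of_apply, Fin.ext_iff]
    split_ifs <;> first | (exfalso; omega) | ring
  rw [Finset.sum_congr rfl (fun c _ => key c), Finset.sum_add_distrib]
  rw [sum_ite_shift 1 i (fun c => A a c * _)]
  rw [dif_pos (show i - 1 < n - 1 ∧ 1 ≤ i from ⟨h2, h1⟩)]
  simp [Finset.sum_ite_eq']

lemma sigma_mul (n i : ℕ) (A : Matrix (Fin (n-1)) (Fin (n-1)) ℤ) (h1 : 1 ≤ i)
    (h2 : i - 1 < n - 1) (a b : Fin (n-1)) :
    (burauSigma n i * A) a b = if a.val + 1 = i then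
      (if h : i - 2 < n-1 ∧ 2 ≤ i then -A ⟨i-2, h.1⟩ b else 0) + A ⟨i-1, h2⟩ b +
        (if h : i - 0 < n-1 ∧ 0 ≤ i then A ⟨i-0, h.1⟩ b else 0)
    else A a b := by
  rw [Matrix.mul_apply]
  by_cases ha : a.val + 1 = i
  · rw [if_pos ha]
    have key : ∀ c : Fin (n-1), burauSigma n i a c * A c b =
        ((if c.val + 2 = i then -A c b else 0) + (if c.val + 1 = i then A c b else 0)) +
        (if c.val + 0 = i then A c b else 0) := by
      intro c
      simp only [burauSigma, Matrix.of_apply, if_pos ha]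
      split_ifs <;> first | (exfalso; omega) | ring
    rw [Finset.sum_congr rfl (fun c _ => key c), Finset.sum_add_distrib,
      Finset.sum_add_distrib, sum_ite_shift 2 i, sum_ite_shift 1 i, sum_ite_shift 0 i]
    rw [dif_pos (show i - 1 < n - 1 ∧ 1 ≤ i from ⟨h2, h1⟩)]
  · rw [if_neg ha]
    have key : ∀ c : Fin (n-1), burauSigma n i a c * A c b =
        (if a = c then A c b else 0) := by
      intro c
      simp only [burauSigma, Matrix.of_apply, if_neg ha]
      split_ifs <;> ring
    rw [Finset.sum_congr rfl (fun c _ => key c)]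
    simp [Finset.sum_ite_eq]




def Dpart (n k : ℕ) : Matrix (Fin (n-1)) (Fin (n-1)) ℤ :=
  Matrix.of fun a b =>
    if a.val < k then
      ((if b.val + 1 = a.val then -1 else 0) + (if b.val + 1 = k then 1 else 0)) +
        (if b.val = k then 1 else 0)
    else if a = b then 1 else 0

set_option maxHeartbeats 1600000 in
lemma Dpart_succ (n k : ℕ) (hk : k < n - 1) :
    Dpart n k * burauSigma n (k+1) = Dpart n (k+1) := by
  ext a b
  rw [mul_sigma n (k+1) _ (by omega) (by omega)]
  simp only [Dpart, Matrix.of_apply, Fin.ext_iff]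
  have ha := a.isLt
  have hb := b.isLt
  split_ifs <;> first | omega

lemma Dpart_prod (n : ℕ) : ∀ k, k ≤ n - 1 →
    ((List.range k).map fun i => burauSigma n (i + 1)).prod = Dpart n k := by
  intro k
  induction k with
  | zero =>
      intro _
      ext a b
      simp [Dpart, Matrix.one_apply]
  | succ k ih =>
      intro hk
      rw [List.range_succ, List.map_append, List.prod_append, ih (by omega)]
      simp only [List.map_cons, List.map_nil, List.prod_cons, List.prod_nil, mul_one]
      exact Dpart_succ n k (by omega)

lemma burauD_eq (n : ℕ) : burauD n = Dpart n (n-1) :=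
  Dpart_prod n (n-1) le_rfl

def Epart (n j : ℕ) : Matrix (Fin (n-1)) (Fin (n-1)) ℤ :=
  Matrix.of fun a b =>
    if a.val < j then
      (if b.val = 0 then (if a.val % 2 = 0 then 1 else -1) else 0) +
        (if b.val = a.val + 1 then 1 else 0)
    else if a = b then 1 else 0

set_option maxHeartbeats 1600000 in
lemma Epart_succ (n j : ℕ) (hj : j < n - 1) :
    burauSigma n (j+1) * Epart n j = Epart n (j+1) := by
  ext a b
  rw [sigma_mul n (j+1) _ (by omega) (by omega)]
  simp only [Epart, Matrix.of_apply, Fin.ext_iff]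
  have ha := a.isLt
  have hb := b.isLt
  split_ifs <;> first | omega

lemma Epart_prod (n : ℕ) : ∀ j, j ≤ n - 1 →
    ((List.range j).reverse.map fun i => burauSigma n (i + 1)).prod = Epart n j := by
  intro j
  induction j with
  | zero =>
      intro _
      ext a b
      simp [Epart, Matrix.one_apply]
  | succ j ih =>
      intro hj
      rw [List.range_succ, List.reverse_append, List.reverse_cons, List.reverse_nil,
        List.nil_append, List.singleton_append, List.map_cons, List.prod_cons,
        ih (by omega)]
      exact Epart_succ n j (by omega)

lemma burauE_eq (n : ℕ) : burauE n = Epart n (n-1) :=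
  Epart_prod n (n-1) le_rfl

/-- For every odd integer `n ≥ 3`, the product `D_n E_n` equals the `(n-1)×(n-1)` matrix
with `-1` in every diagonal entry, `-2` in the first column in every 1-based even row
(0-based odd row), and `0` everywhere else. -/
theorem burauDE_eq (n : ℕ) (hn : 3 ≤ n) (hodd : Odd n) :
    burauD n * burauE n = Matrix.of fun a b : Fin (n - 1) =>
      if a = b then -1 else if b.val = 0 ∧ a.val % 2 = 1 then -2 else 0 := by
  obtain ⟨t, ht⟩ := hodd
  rw [burauD_eq, burauE_eq]
  ext a b
  rw [Matrix.mul_apply]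
  have ha := a.isLt
  have hb := b.isLt
  have key : ∀ c : Fin (n-1), Dpart n (n-1) a c * Epart n (n-1) c b =
      (if c.val + 1 = a.val then -Epart n (n-1) c b else 0) +
      (if c.val + 1 = n - 1 then Epart n (n-1) c b else 0) := by
    intro c
    have hc := c.isLt
    simp only [Dpart, Matrix.of_apply]
    split_ifs <;> first | (exfalso; omega) | ring
  rw [Finset.sum_congr rfl (fun c _ => key c), Finset.sum_add_distrib,
    sum_ite_shift 1 a.val, sum_ite_shift 1 (n-1)]
  rw [dif_pos (show n - 1 - 1 < n - 1 ∧ 1 ≤ n - 1 from by omega)]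
  simp only [Epart, Matrix.of_apply, Fin.ext_iff, Fin.val_mk]
  split_ifs <;> omega
end

section
/- For every odd integer n ≥ 3, the square (D_n E_n)² equals the (n−1)×(n−1) integer matrix N given by: N_{i,i} = 1 for all 1 ≤ i ≤ n−1; N_{i,1} = 4 for every even index i with 2 ≤ i ≤ n−1; and all other entries of N are 0. (In block form: N is the identity matrix except that the first column below the top entry alternates 4, 0, 4, 0, …, 4.) -/
lemma mySumCollapse {m : ℕ} (f : Fin m → ℤ) (j : Fin m)
    (h0 : ∀ c, c ≠ j → f c = 0) : (∑ c, f c) = f j :=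
  Finset.sum_eq_single j (fun c _ hc => h0 c hc) (fun h => absurd (Finset.mem_univ j) h)

lemma sumCollapseL {m : ℕ} (p : Fin m → Prop) [DecidablePred p] (j : Fin m)
    (hp : ∀ c, p c ↔ c = j) (v g : Fin m → ℤ) :
    (∑ c, (if p c then v c else 0) * g c) = v j * g j := by
  rw [mySumCollapse _ j fun c hc => by rw [if_neg (fun h => hc ((hp c).mp h)), zero_mul]]
  rw [if_pos ((hp j).mpr rfl)]

lemma sumCollapseR {m : ℕ} (p : Fin m → Prop) [DecidablePred p] (j : Fin m)
    (hp : ∀ c, p c ↔ c = j) (v g : Fin m → ℤ) :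
    (∑ c, g c * (if p c then v c else 0)) = g j * v j := by
  rw [mySumCollapse _ j fun c hc => by rw [if_neg (fun h => hc ((hp c).mp h)), mul_zero]]
  rw [if_pos ((hp j).mpr rfl)]

lemma sumZeroL {m : ℕ} (p : Fin m → Prop) [DecidablePred p]
    (hp : ∀ c, ¬ p c) (v g : Fin m → ℤ) :
    (∑ c, (if p c then v c else 0) * g c) = 0 :=
  Finset.sum_eq_zero fun c _ => by rw [if_neg (hp c), zero_mul]

set_option maxHeartbeats 2000000 in
lemma P_eq (n : ℕ) (hn : 3 ≤ n) :
    ∀ k, k ≤ n - 1 →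
    ((List.range k).map fun i => burauSigma n (i + 1)).prod =
      Matrix.of fun a b : Fin (n - 1) =>
        if a.val < k then
          (if b.val + 1 = a.val then (-1 : ℤ) else 0) +
            (if b.val + 1 = k then 1 else 0) + (if b.val = k then 1 else 0)
        else if a = b then 1 else 0 := by
  intro k
  induction k with
  | zero =>
      intro _
      simp only [List.range_zero, List.map_nil, List.prod_nil]
      ext a b
      simp [Matrix.one_apply]
  | succ k ih =>
      intro hk1
      have hk : k < n - 1 := by omega
      rw [List.range_succ, List.map_append, List.prod_append, List.map_cons, List.map_nil,
        List.prod_cons, List.prod_nil, mul_one, ih (le_of_lt hk)]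
      ext a b
      rw [Matrix.mul_apply]
      have hσ : ∀ c : Fin (n - 1), burauSigma n (k + 1) c b =
          (if c = b then (1 : ℤ) else 0) +
          (if c.val = k then
            (if b.val + 1 = k then (-1 : ℤ) else 0) + (if b.val = k + 1 then 1 else 0)
          else 0) := by
        intro c
        simp only [burauSigma, Matrix.of_apply, Fin.ext_iff]
        split_ifs <;> omega
      simp only [hσ, mul_add]
      rw [Finset.sum_add_distrib]
      rw [sumCollapseR (fun c => c = b) b (fun c => Iff.rfl)]
      rw [sumCollapseR (fun c => c.val = k) (⟨k, hk⟩ : Fin (n - 1))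
        (fun c => by constructor
                     · intro h; apply Fin.ext; simpa using h
                     · intro h; subst h; rfl)]
      have ha := a.isLt
      have hb := b.isLt
      simp only [Matrix.of_apply, Fin.ext_iff, Fin.val_mk]
      split_ifs <;> omega

set_option maxHeartbeats 2000000 in
lemma F_eq (n : ℕ) (hn : 3 ≤ n) :
    ∀ k, k ≤ n - 1 →
    ((List.range k).reverse.map fun i => burauSigma n (i + 1)).prod =
      Matrix.of fun a b : Fin (n - 1) =>
        if a.val < k then
          (if b.val = 0 then (-1 : ℤ) ^ a.val else 0) + (if b.val = a.val + 1 then 1 else 0)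
        else if a = b then 1 else 0 := by
  intro k
  induction k with
  | zero =>
      intro _
      simp only [List.range_zero, List.reverse_nil, List.map_nil, List.prod_nil]
      ext a b
      simp [Matrix.one_apply]
  | succ k ih =>
      intro hk1
      have hk : k < n - 1 := by omega
      have hrev : (List.range (k + 1)).reverse = k :: (List.range k).reverse := by
        rw [List.range_succ, List.reverse_append]; rfl
      rw [hrev, List.map_cons, List.prod_cons, ih (le_of_lt hk)]
      ext a b
      rw [Matrix.mul_apply]
      have hσ : ∀ c : Fin (n - 1), burauSigma n (k + 1) a c =
          (if a = c then (1 : ℤ) else 0) +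
          (if a.val = k then
            (if c.val + 1 = k then (-1 : ℤ) else 0) + (if c.val = k + 1 then 1 else 0)
          else 0) := by
        intro c
        simp only [burauSigma, Matrix.of_apply, Fin.ext_iff]
        split_ifs <;> omega
      simp only [hσ, add_mul]
      rw [Finset.sum_add_distrib]
      rw [sumCollapseL (fun c => a = c) a (fun c => eq_comm)]
      by_cases hak : a.val = k
      · simp only [hak, eq_self_iff_true, if_true, add_mul]
        rw [Finset.sum_add_distrib]
        by_cases hk0 : k = 0
        · rw [sumZeroL (fun c => c.val + 1 = k) (fun c => by omega)]
          by_cases hk2 : k + 1 < n - 1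
          · rw [sumCollapseL (fun c => c.val = k + 1) (⟨k + 1, hk2⟩ : Fin (n - 1))
              (fun c => by constructor
                           · intro h; apply Fin.ext; simpa using h
                           · intro h; subst h; rfl)]
            have ha := a.isLt
            have hb := b.isLt
            simp only [Matrix.of_apply, Fin.ext_iff, Fin.val_mk, hak, hk0, pow_zero]
            split_ifs <;> omega
          · exact absurd (by omega) hk2
        · rw [sumCollapseL (fun c => c.val + 1 = k) (⟨k - 1, by omega⟩ : Fin (n - 1))
            (fun c => by constructor
                         · intro h; apply Fin.ext; simp only [Fin.val_mk]; omega
                         · intro h; subst h; simp only [Fin.val_mk]; omega)]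
          have hcoll2 : (∑ c : Fin (n - 1), (if c.val = k + 1 then (1 : ℤ) else 0) *
              (Matrix.of fun a b : Fin (n - 1) =>
                if a.val < k then
                  (if b.val = 0 then (-1 : ℤ) ^ a.val else 0) +
                    (if b.val = a.val + 1 then 1 else 0)
                else if a = b then 1 else 0) c b) =
              if b.val = k + 1 then 1 else 0 := by
            by_cases hk2 : k + 1 < n - 1
            · rw [sumCollapseL (fun c => c.val = k + 1) (⟨k + 1, hk2⟩ : Fin (n - 1))
                (fun c => by constructor
                             · intro h; apply Fin.ext; simpa using h
                             · intro h; subst h; rfl)]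
              simp only [Matrix.of_apply, Fin.ext_iff, Fin.val_mk]
              have hb := b.isLt
              split_ifs <;> omega
            · rw [sumZeroL (fun c => c.val = k + 1) (fun c => by have := c.isLt; omega)]
              rw [if_neg (by have := b.isLt; omega)]
          rw [hcoll2]
          have ha := a.isLt
          have hb := b.isLt
          have hpow : (-1 : ℤ) ^ k = (-1 : ℤ) ^ (k - 1) * (-1) := by
            rw [← pow_succ]; congr 1; omega
          simp only [Matrix.of_apply, Fin.ext_iff, Fin.val_mk, hak, hpow]
          split_ifs <;> first | omega | ring
      · rw [sumZeroL (fun _ : Fin (n - 1) => a.val = k) (fun c => hak)]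
        have ha := a.isLt
        have hb := b.isLt
        simp only [Matrix.of_apply, Fin.ext_iff]
        split_ifs <;> first | omega | ring

lemma burauD_apply (n : ℕ) (hn : 3 ≤ n) (a b : Fin (n - 1)) :
    burauD n a b =
      (if b.val + 1 = a.val then (-1 : ℤ) else 0) + (if b.val = n - 2 then 1 else 0) := by
  have h := congrFun (congrFun (P_eq n hn (n - 1) le_rfl) a) b
  rw [burauD, h]
  have ha := a.isLt
  have hb := b.isLt
  simp only [Matrix.of_apply]
  split_ifs <;> omega

lemma burauE_apply (n : ℕ) (hn : 3 ≤ n) (a b : Fin (n - 1)) :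
    burauE n a b =
      (if b.val = 0 then (-1 : ℤ) ^ a.val else 0) + (if b.val = a.val + 1 then 1 else 0) := by
  have h := congrFun (congrFun (F_eq n hn (n - 1) le_rfl) a) b
  rw [burauE, h]
  simp only [Matrix.of_apply]
  rw [if_pos a.isLt]

lemma burauM_apply (n : ℕ) (hn : 3 ≤ n) (hodd : Odd n) (a b : Fin (n - 1)) :
    (burauD n * burauE n) a b =
      (if a = b then (-1 : ℤ) else 0) +
        (if b.val = 0 ∧ a.val % 2 = 1 then -2 else 0) := by
  obtain ⟨t, ht⟩ := hodd
  have hn2 : n - 2 < n - 1 := by omega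
  have ha := a.isLt
  have hb := b.isLt
  rw [Matrix.mul_apply]
  simp only [burauD_apply n hn, burauE_apply n hn, add_mul]
  rw [Finset.sum_add_distrib]
  rw [sumCollapseL (fun c => c.val = n - 2) (⟨n - 2, hn2⟩ : Fin (n - 1))
    (fun c => by constructor
                 · intro h; apply Fin.ext; simpa using h
                 · intro h; subst h; rfl)]
  have hpn : (-1 : ℤ) ^ (n - 2) = -1 := Odd.neg_one_pow ⟨t - 1, by omega⟩
  by_cases ha0 : a.val = 0
  · rw [sumZeroL (fun c => c.val + 1 = a.val) (fun c => by omega)]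
    simp only [Fin.val_mk, Fin.ext_iff, hpn]
    split_ifs <;> omega
  · rw [sumCollapseL (fun c => c.val + 1 = a.val) (⟨a.val - 1, by omega⟩ : Fin (n - 1))
      (fun c => by constructor
                   · intro h; apply Fin.ext; simp only [Fin.val_mk]; omega
                   · intro h; subst h; simp only [Fin.val_mk]; omega)]
    rcases Nat.even_or_odd a.val with he | ho
    · obtain ⟨s, hs⟩ := he
      have hp2 : (-1 : ℤ) ^ (a.val - 1) = -1 := Odd.neg_one_pow ⟨s - 1, by omega⟩
      simp only [Fin.val_mk, Fin.ext_iff, hpn, hp2]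
      split_ifs <;> omega
    · obtain ⟨s, hs⟩ := ho
      have hp2 : (-1 : ℤ) ^ (a.val - 1) = 1 := Even.neg_one_pow ⟨s, by omega⟩
      simp only [Fin.val_mk, Fin.ext_iff, hpn, hp2]
      split_ifs <;> omega

/-- For every odd integer `n ≥ 3`, the square `(D_n E_n)²` equals the `(n-1)×(n-1)` matrix
which is the identity except that the first column carries a `4` in every 1-based even row
(0-based odd row). -/
theorem burauDE_sq_eq (n : ℕ) (hn : 3 ≤ n) (hodd : Odd n) :
    (burauD n * burauE n) ^ 2 = Matrix.of fun a b : Fin (n - 1) =>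
      if a = b then 1 else if b.val = 0 ∧ a.val % 2 = 1 then 4 else 0 := by
  ext a b
  rw [pow_two, Matrix.mul_apply]
  simp only [burauM_apply n hn hodd, add_mul, mul_add]
  simp only [Finset.sum_add_distrib]
  rw [sumCollapseL (fun c => a = c) a (fun c => eq_comm)]
  rw [sumCollapseL (fun c => a = c) a (fun c => eq_comm)]
  rw [sumCollapseR (fun c => c = b) b (fun c => Iff.rfl)]
  have hz : (∑ c : Fin (n - 1), (if c.val = 0 ∧ a.val % 2 = 1 then (-2 : ℤ) else 0) *
      (if b.val = 0 ∧ c.val % 2 = 1 then (-2 : ℤ) else 0)) = 0 := by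
    refine Finset.sum_eq_zero fun c _ => ?_
    by_cases hc : c.val = 0
    · rw [if_neg (show ¬(b.val = 0 ∧ c.val % 2 = 1) by omega), mul_zero]
    · rw [if_neg (show ¬(c.val = 0 ∧ a.val % 2 = 1) by omega), zero_mul]
  rw [hz]
  have ha := a.isLt
  have hb := b.isLt
  simp only [Matrix.of_apply, Fin.ext_iff]
  split_ifs <;> omega
end

section
/- For every integer k ≥ 1, setting n = 2k+1, the determinant of the 2k×2k integer matrix I_{2k} − (D_{2k+1} E_{2k+1})^{2(k+1)} D_{2k+1} equals −4k² − 4k + 1, where I_{2k} denotes the 2k×2k identity matrix. (This is the reduced Burau computation at t = −1 for the braid β_{2k+1,2k+3} = (δδ^Δ)^{2k+2}δ in B_{2k+1}, showing that the determinant of the closure knot K_k has absolute value 4k² + 4k − 1.) -/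
open Matrix Finset

set_option maxHeartbeats 2000000

namespace BurauAux

def sig (m i : ℕ) : Matrix (Fin m) (Fin m) ℤ := burauSigma (m + 1) i

lemma sig_apply (m i : ℕ) (a b : Fin m) :
    sig m i a b = if a.val + 1 = i then
      if b.val + 2 = i then -1 else if b.val + 1 = i then 1 else if b.val = i then 1 else 0
    else if a = b then 1 else 0 := rfl

lemma sum_ite_add {M : Type*} [AddCommMonoid M] {m : ℕ} (t v : ℕ) (f : Fin m → M) :
    (∑ c : Fin m, if (c : ℕ) + t = v then f c else 0)
      = if h : t ≤ v ∧ v - t < m then f ⟨v - t, h.2⟩ else 0 := by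
  split_ifs with h
  · rw [Finset.sum_eq_single (⟨v - t, h.2⟩ : Fin m)]
    · rw [if_pos (show ((⟨v - t, h.2⟩ : Fin m) : ℕ) + t = v by simp only [Fin.val_mk]; omega)]
    · intro c _ hc
      rw [if_neg]
      intro hcv
      exact hc (Fin.ext (by simp; omega))
    · simp
  · apply Finset.sum_eq_zero
    intro c _
    rw [if_neg]
    have := c.isLt
    omega

lemma sum_ite_val {M : Type*} [AddCommMonoid M] {m : ℕ} (v : ℕ) (f : Fin m → M) :
    (∑ c : Fin m, if (c : ℕ) = v then f c else 0)
      = if h : v < m then f ⟨v, h⟩ else 0 := by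
  have := sum_ite_add (M := M) (m := m) 0 v f
  simp only [Nat.add_zero, Nat.sub_zero, Nat.zero_le, true_and] at this
  exact this

lemma sum_ite_val' {M : Type*} [AddCommMonoid M] {m : ℕ} (v : ℕ) (f : Fin m → M) :
    (∑ c : Fin m, if v = (c : ℕ) then f c else 0)
      = if h : v < m then f ⟨v, h⟩ else 0 := by
  have key : ∀ c : Fin m, (if v = (c : ℕ) then f c else 0) = (if (c : ℕ) = v then f c else 0) := by
    intro c
    by_cases h : v = (c : ℕ)
    · rw [if_pos h, if_pos h.symm]
    · rw [if_neg h, if_neg fun hh => h hh.symm]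
  rw [Finset.sum_congr rfl fun c _ => key c, sum_ite_val]

/-- right multiplication by a Burau generator -/
lemma mul_sigma {m : ℕ} (i : ℕ) (M : Matrix (Fin m) (Fin m) ℤ) (a b : Fin m) :
    (M * sig m i) a b
      = M a b + (if h : 1 ≤ i ∧ i - 1 < m then
          M a ⟨i - 1, h.2⟩ *
            (if (b : ℕ) + 2 = i then -1 else if (b : ℕ) + 1 = i then 0
               else if (b : ℕ) = i then 1 else 0)
          else 0) := by
  rw [Matrix.mul_apply]
  have key : ∀ c : Fin m, M a c * sig m i c b
      = (if c = b then M a b else 0)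
        + (if (c : ℕ) + 1 = i then
            M a c * (if (b : ℕ) + 2 = i then -1 else if (b : ℕ) + 1 = i then 0
              else if (b : ℕ) = i then 1 else 0)
          else 0) := by
    intro c
    simp only [sig_apply]
    by_cases hc : (c : ℕ) + 1 = i
    · rw [if_pos hc, if_pos hc]
      by_cases hcb : c = b
      · subst hcb
        rw [if_pos rfl]
        have h2 : ¬((c : ℕ) + 2 = i) := by omega
        rw [if_neg h2, if_pos hc, if_neg h2, if_pos hc]
        ring
      · rw [if_neg hcb]
        have hvb : ¬((b : ℕ) + 1 = i) := fun h => hcb (Fin.ext (by omega))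
        simp only [if_neg hvb]
        split_ifs <;> ring
    · rw [if_neg hc, if_neg hc]
      by_cases hcb : c = b
      · subst hcb; simp
      · rw [if_neg hcb, if_neg hcb]; ring
  rw [Finset.sum_congr rfl fun c _ => key c, Finset.sum_add_distrib]
  congr 1
  · simp
  · rw [sum_ite_add 1 i]

/-- left multiplication by a Burau generator -/
lemma sigma_mul {m : ℕ} (i : ℕ) (M : Matrix (Fin m) (Fin m) ℤ) (a b : Fin m) :
    (sig m i * M) a b
      = if (a : ℕ) + 1 = i then
          ((if h : 2 ≤ i ∧ i - 2 < m then -M ⟨i - 2, h.2⟩ b else 0)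
            + M a b
            + (if h : i < m then M ⟨i, h⟩ b else 0))
        else M a b := by
  rw [Matrix.mul_apply]
  by_cases ha : (a : ℕ) + 1 = i
  · rw [if_pos ha]
    have key : ∀ c : Fin m, sig m i a c * M c b
        = (if (c : ℕ) + 2 = i then -M c b else 0)
          + ((if (c : ℕ) + 1 = i then M c b else 0)
          + (if (c : ℕ) = i then M c b else 0)) := by
      intro c
      simp only [sig_apply, if_pos ha]
      split_ifs <;> first | ring1 | (exfalso; omega)
    rw [Finset.sum_congr rfl fun c _ => key c, Finset.sum_add_distrib,
      Finset.sum_add_distrib, sum_ite_add 2 i, sum_ite_add 1 i, sum_ite_val i]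
    have h1 : (1 ≤ i ∧ i - 1 < m) := by have := a.isLt; omega
    rw [dif_pos h1]
    have hfa : (⟨i - 1, h1.2⟩ : Fin m) = a := Fin.ext (by simp; omega)
    rw [hfa]
    ring
  · rw [if_neg ha]
    have key : ∀ c : Fin m, sig m i a c * M c b
        = if a = c then M c b else 0 := by
      intro c
      simp only [sig_apply, if_neg ha]
      split_ifs <;> ring
    rw [Finset.sum_congr rfl fun c _ => key c]
    simp


/-- partial product `σ_1 ⋯ σ_j` -/
def Pm (m j : ℕ) : Matrix (Fin m) (Fin m) ℤ :=
  Matrix.of fun a b =>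
    if (a : ℕ) < j then
      (if (b : ℕ) + 1 = (a : ℕ) then -1 else 0) + (if (b : ℕ) + 1 = j then 1 else 0)
        + (if (b : ℕ) = j then 1 else 0)
    else if a = b then 1 else 0

/-- partial product `σ_j ⋯ σ_1` -/
def Qm (m j : ℕ) : Matrix (Fin m) (Fin m) ℤ :=
  Matrix.of fun a b =>
    if (a : ℕ) < j then
      (if (b : ℕ) = 0 then (if (a : ℕ) % 2 = 0 then 1 else -1) else 0)
        + (if (b : ℕ) = (a : ℕ) + 1 then 1 else 0)
    else if a = b then 1 else 0

lemma P_prod (m : ℕ) : ∀ j, j ≤ m →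
    ((List.range j).map fun i => sig m (i + 1)).prod = Pm m j := by
  intro j
  induction j with
  | zero =>
    intro _
    ext a b
    simp [Pm, Matrix.one_apply]
  | succ j ih =>
    intro hj
    rw [List.range_succ, List.map_append, List.prod_append, List.map_cons, List.map_nil,
      List.prod_cons, List.prod_nil, mul_one, ih (by omega)]
    ext a b
    rw [mul_sigma]
    have hd : 1 ≤ j + 1 ∧ j + 1 - 1 < m := by omega
    rw [dif_pos hd]
    have hb := b.isLt
    have ha := a.isLt
    simp only [Pm, Matrix.of_apply, Fin.val_mk, Fin.ext_iff, Nat.add_sub_cancel]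
    split_ifs <;> omega

lemma Q_prod (m : ℕ) : ∀ j, j ≤ m →
    ((List.range j).reverse.map fun i => sig m (i + 1)).prod = Qm m j := by
  intro j
  induction j with
  | zero =>
    intro _
    ext a b
    simp [Qm, Matrix.one_apply]
  | succ j ih =>
    intro hj
    rw [List.range_succ, List.reverse_append, List.reverse_singleton,
      List.singleton_append, List.map_cons, List.prod_cons, ih (by omega)]
    ext a b
    rw [sigma_mul]
    have hb := b.isLt
    have ha := a.isLt
    by_cases hrow : (a : ℕ) + 1 = j + 1
    · rw [if_pos hrow]
      by_cases h2 : 2 ≤ j + 1 ∧ j + 1 - 2 < m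
      · rw [dif_pos h2]
        by_cases h3 : j + 1 < m
        · rw [dif_pos h3]
          simp only [Qm, Matrix.of_apply, Fin.val_mk, Fin.ext_iff]
          split_ifs <;> omega
        · rw [dif_neg h3]
          simp only [Qm, Matrix.of_apply, Fin.val_mk, Fin.ext_iff]
          split_ifs <;> omega
      · rw [dif_neg h2]
        by_cases h3 : j + 1 < m
        · rw [dif_pos h3]
          simp only [Qm, Matrix.of_apply, Fin.val_mk, Fin.ext_iff]
          split_ifs <;> omega
        · rw [dif_neg h3]
          simp only [Qm, Matrix.of_apply, Fin.val_mk, Fin.ext_iff]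
          split_ifs <;> omega
    · rw [if_neg hrow]
      simp only [Qm, Matrix.of_apply, Fin.ext_iff]
      split_ifs <;> omega



def Cm (k : ℕ) : Matrix (Fin (2 * k)) (Fin (2 * k)) ℤ :=
  Matrix.of fun a b => if (b : ℕ) = 0 ∧ (a : ℕ) % 2 = 1 then 2 else 0

lemma DE_eq (k : ℕ) (hk : 1 ≤ k) :
    Pm (2 * k) (2 * k) * Qm (2 * k) (2 * k) = -(1 + Cm k) := by
  ext a b
  rw [Matrix.mul_apply]
  have ha := a.isLt
  have hb := b.isLt
  have key : ∀ c : Fin (2 * k), Pm (2 * k) (2 * k) a c * Qm (2 * k) (2 * k) c b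
      = (if (c : ℕ) + 1 = (a : ℕ) then -(Qm (2 * k) (2 * k) c b) else 0)
        + (if (c : ℕ) + 1 = 2 * k then Qm (2 * k) (2 * k) c b else 0) := by
    intro c
    have hc := c.isLt
    simp only [Pm, Matrix.of_apply, if_pos ha]
    split_ifs <;> first | ring1 | (exfalso; omega)
  rw [Finset.sum_congr rfl fun c _ => key c, Finset.sum_add_distrib,
    sum_ite_add 1 (a : ℕ), sum_ite_add 1 (2 * k), dif_pos (show 1 ≤ 2 * k ∧ 2 * k - 1 < 2 * k by omega)]
  by_cases h1 : 1 ≤ (a : ℕ) ∧ (a : ℕ) - 1 < 2 * k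
  · rw [dif_pos h1]
    simp only [Qm, Cm, Matrix.of_apply, Matrix.neg_apply, Matrix.add_apply,
      Matrix.one_apply, Fin.ext_iff, Fin.val_mk]
    split_ifs <;> omega
  · rw [dif_neg h1]
    simp only [Qm, Cm, Matrix.of_apply, Matrix.neg_apply, Matrix.add_apply,
      Matrix.one_apply, Fin.ext_iff, Fin.val_mk]
    split_ifs <;> omega

lemma Cm_sq (k : ℕ) : Cm k * Cm k = 0 := by
  ext a b
  rw [Matrix.mul_apply]
  apply Finset.sum_eq_zero
  intro c _
  simp only [Cm, Matrix.of_apply, Matrix.zero_apply]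
  split_ifs <;> omega

lemma one_add_Cm_pow (k : ℕ) (e : ℕ) : (1 + Cm k) ^ e = 1 + (e : ℤ) • Cm k := by
  induction e with
  | zero => simp
  | succ e ih =>
    rw [pow_succ, ih, mul_add, mul_one, add_mul, one_mul, smul_mul_assoc, Cm_sq,
      smul_zero, add_zero]
    push_cast
    rw [add_smul, one_smul]
    abel

def CPm (k : ℕ) : Matrix (Fin (2 * k)) (Fin (2 * k)) ℤ :=
  Matrix.of fun a b => if (a : ℕ) % 2 = 1 ∧ (b : ℕ) + 1 = 2 * k then 2 else 0

lemma CP_eq (k : ℕ) (hk : 1 ≤ k) : Cm k * Pm (2 * k) (2 * k) = CPm k := by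
  ext a b
  rw [Matrix.mul_apply]
  have hb := b.isLt
  by_cases hp : (a : ℕ) % 2 = 1
  · have key : ∀ c : Fin (2 * k), Cm k a c * Pm (2 * k) (2 * k) c b
        = if (c : ℕ) = 0 then 2 * Pm (2 * k) (2 * k) c b else 0 := by
      intro c
      simp only [Cm, Matrix.of_apply]
      split_ifs <;> first | ring1 | (exfalso; omega)
    rw [Finset.sum_congr rfl fun c _ => key c, sum_ite_val 0,
      dif_pos (show 0 < 2 * k by omega)]
    simp only [Pm, CPm, Matrix.of_apply, Fin.val_mk, Fin.ext_iff]
    split_ifs <;> first | contradiction | omega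
  · rw [Finset.sum_eq_zero, CPm, Matrix.of_apply, if_neg (by omega)]
    intro c _
    simp only [Cm, Matrix.of_apply]
    rw [if_neg (by omega), zero_mul]

def Lm (k : ℕ) : Matrix (Fin (2 * k)) (Fin (2 * k)) ℤ :=
  Matrix.of fun a b => (if a = b then 1 else 0) + (if (b : ℕ) + 1 = (a : ℕ) then 1 else 0)

def Lm' (k : ℕ) : Matrix (Fin (2 * k)) (Fin (2 * k)) ℤ :=
  Matrix.of fun a b =>
    if (b : ℕ) ≤ (a : ℕ) then (if ((a : ℕ) - (b : ℕ)) % 2 = 0 then 1 else -1) else 0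

def wv (k : ℕ) : Fin (2 * k) → ℤ := fun a => -(1 + if (a : ℕ) % 2 = 1 then 4 * ((k : ℤ) + 1) else 0)
def ev (k : ℕ) : Fin (2 * k) → ℤ := fun b => if (b : ℕ) + 1 = 2 * k then 1 else 0
def uv (k : ℕ) : Fin (2 * k) → ℤ := fun b => if (b : ℕ) % 2 = 1 then 1 else -1

lemma decomp (k : ℕ) (hk : 1 ≤ k) :
    (1 : Matrix (Fin (2 * k)) (Fin (2 * k)) ℤ)
        - (Pm (2 * k) (2 * k) + ((2 * (k + 1) : ℕ) : ℤ) • CPm k)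
      = Lm k + Matrix.replicateCol Unit (wv k) * Matrix.replicateRow Unit (ev k) := by
  ext a b
  have ha := a.isLt
  have hb := b.isLt
  have hcr : (Matrix.replicateCol Unit (wv k) * Matrix.replicateRow Unit (ev k)) a b = wv k a * ev k b := by
    rw [Matrix.mul_apply]
    simp [Matrix.replicateCol_apply, Matrix.replicateRow_apply]
  simp only [Matrix.sub_apply, Matrix.add_apply, Matrix.one_apply, Matrix.smul_apply,
    Pm, CPm, Lm, Matrix.of_apply, smul_eq_mul, hcr, wv, ev, Fin.ext_iff, if_pos ha]
  push_cast
  split_ifs <;> first | ring1 | (exfalso; omega) | (push_cast; omega)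

lemma L'L (k : ℕ) : Lm' k * Lm k = 1 := by
  ext a b
  rw [Matrix.mul_apply]
  have ha := a.isLt
  have hb := b.isLt
  have key : ∀ c : Fin (2 * k), Lm' k a c * Lm k c b
      = (if c = b then Lm' k a c else 0) + (if (b : ℕ) + 1 = (c : ℕ) then Lm' k a c else 0) := by
    intro c
    simp only [Lm, Matrix.of_apply]
    split_ifs <;> ring1
  rw [Finset.sum_congr rfl fun c _ => key c, Finset.sum_add_distrib,
    Finset.sum_ite_eq' Finset.univ b, sum_ite_val' ((b : ℕ) + 1)]
  by_cases h1 : (b : ℕ) + 1 < 2 * k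
  · rw [dif_pos h1]
    simp only [Lm', Matrix.of_apply, Matrix.one_apply, Fin.ext_iff, Fin.val_mk,
      Finset.mem_univ, if_pos]
    split_ifs <;> omega
  · rw [dif_neg h1]
    simp only [Lm', Matrix.of_apply, Matrix.one_apply, Fin.ext_iff, Finset.mem_univ, if_pos]
    split_ifs <;> omega

lemma detLm (k : ℕ) : (Lm k).det = 1 := by
  rw [Matrix.det_of_lowerTriangular (Lm k)
    (by
      intro i j hij
      have : (i : ℕ) < (j : ℕ) := hij
      simp only [Lm, Matrix.of_apply]
      rw [if_neg (by simp [Fin.ext_iff]; omega), if_neg (by omega), add_zero])]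
  apply Finset.prod_eq_one
  intro i _
  show (if i = i then (1 : ℤ) else 0) + (if (i : ℕ) + 1 = (i : ℕ) then 1 else 0) = 1
  rw [if_pos rfl, if_neg (by omega), add_zero]

lemma row_ev_Lm' (k : ℕ) (hk : 1 ≤ k) :
    Matrix.replicateRow Unit (ev k) * Lm' k = Matrix.replicateRow Unit (uv k) := by
  ext u b
  rw [Matrix.mul_apply]
  have hb := b.isLt
  have key : ∀ c : Fin (2 * k), Matrix.replicateRow Unit (ev k) u c * Lm' k c b
      = if (c : ℕ) + 1 = 2 * k then Lm' k c b else 0 := by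
    intro c
    simp only [Matrix.replicateRow_apply, ev]
    split_ifs <;> ring1
  rw [Finset.sum_congr rfl fun c _ => key c, sum_ite_add 1 (2 * k),
    dif_pos (show 1 ≤ 2 * k ∧ 2 * k - 1 < 2 * k by omega)]
  simp only [Lm', Matrix.of_apply, Matrix.replicateRow_apply, uv, Fin.val_mk]
  split_ifs <;> omega

lemma sum_range_two (K : ℕ) (c : ℤ) :
    (∑ x ∈ Finset.range (2 * K), if x % 2 = 1 then c else 1) = K * (c + 1) := by
  induction K with
  | zero => simp
  | succ K ih =>
    have h2 : 2 * (K + 1) = 2 * K + 1 + 1 := by ring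
    rw [h2, Finset.sum_range_succ, Finset.sum_range_succ, ih,
      if_neg (by omega), if_pos (by omega)]
    push_cast
    ring

end BurauAux

/-- For every integer `k ≥ 1`, with `n = 2k+1`, the determinant of the `2k×2k` integer
matrix `I_{2k} - (D_{2k+1} E_{2k+1})^{2(k+1)} D_{2k+1}` equals `-4k² - 4k + 1`. (This is
the reduced Burau computation at `t = -1` for the braid `β_{2k+1,2k+3} = (δδ^Δ)^{2k+2} δ`
in `B_{2k+1}`, showing the determinant of its closure `K_k` has absolute value
`4k² + 4k - 1`.) -/
theorem det_one_sub_burau (k : ℕ) (hk : 1 ≤ k) :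
    ((1 : Matrix (Fin (2 * k + 1 - 1)) (Fin (2 * k + 1 - 1)) ℤ) -
        (burauD (2 * k + 1) * burauE (2 * k + 1)) ^ (2 * (k + 1)) *
          burauD (2 * k + 1)).det = -4 * (k : ℤ) ^ 2 - 4 * k + 1 := by
  have hD : burauD (2 * k + 1) = BurauAux.Pm (2 * k) (2 * k) := by
    have h0 : burauD (2 * k + 1)
        = ((List.range (2 * k)).map fun i => BurauAux.sig (2 * k) (i + 1)).prod := rfl
    rw [h0, BurauAux.P_prod (2 * k) (2 * k) le_rfl]
  have hE : burauE (2 * k + 1) = BurauAux.Qm (2 * k) (2 * k) := by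
    have h0 : burauE (2 * k + 1)
        = ((List.range (2 * k)).reverse.map fun i => BurauAux.sig (2 * k) (i + 1)).prod := rfl
    rw [h0, BurauAux.Q_prod (2 * k) (2 * k) le_rfl]
  rw [hD, hE]
  show ((1 : Matrix (Fin (2 * k)) (Fin (2 * k)) ℤ) -
      (BurauAux.Pm (2 * k) (2 * k) * BurauAux.Qm (2 * k) (2 * k)) ^ (2 * (k + 1)) *
        BurauAux.Pm (2 * k) (2 * k)).det = -4 * (k : ℤ) ^ 2 - 4 * k + 1
  rw [BurauAux.DE_eq k hk, Even.neg_pow ⟨k + 1, by ring⟩, BurauAux.one_add_Cm_pow,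
    add_mul, one_mul, smul_mul_assoc, BurauAux.CP_eq k hk, BurauAux.decomp k hk]
  have h1 : Matrix.replicateRow Unit (BurauAux.uv k) * BurauAux.Lm k = Matrix.replicateRow Unit (BurauAux.ev k) := by
    rw [← BurauAux.row_ev_Lm' k hk, Matrix.mul_assoc, BurauAux.L'L, Matrix.mul_one]
  have hfac : BurauAux.Lm k + Matrix.replicateCol Unit (BurauAux.wv k) * Matrix.replicateRow Unit (BurauAux.ev k)
      = (1 + Matrix.replicateCol Unit (BurauAux.wv k) * Matrix.replicateRow Unit (BurauAux.uv k))
          * BurauAux.Lm k := by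
    rw [add_mul, one_mul, Matrix.mul_assoc, h1]
  rw [hfac, Matrix.det_mul, BurauAux.detLm, mul_one, Matrix.det_one_add_replicateCol_mul_replicateRow]
  simp only [dotProduct]
  have hterm : ∀ b : Fin (2 * k), BurauAux.uv k b * BurauAux.wv k b
      = if (b : ℕ) % 2 = 1 then -(1 + 4 * ((k : ℤ) + 1)) else 1 := by
    intro b
    simp only [BurauAux.uv, BurauAux.wv]
    split_ifs <;> ring
  rw [Finset.sum_congr rfl fun b _ => hterm b,
    Fin.sum_univ_eq_sum_range (fun x => if x % 2 = 1 then -(1 + 4 * ((k : ℤ) + 1)) else 1) (2 * k),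
    BurauAux.sum_range_two k (-(1 + 4 * ((k : ℤ) + 1)))]
  push_cast
  ring
end
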